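/- The ε-simplification functor perturbs a persistence module by at most ε in the interleaving distance: for any multiparameter persistence module M, the modules M and S_ε(M) are ε-interleaved, hence d_I(M, S_ε(M)) ≤ ε. -/

import Mathlib

/-- A persistence module over a poset `P` with coefficients in a field `K`:
a functor from `(P, ≤)` to the category of `K`-vector spaces. -/
structure PMod (P : Type) [Preorder P] (K : Type) [Field K] where
  V : P → Type
  [addCommGroup : ∀ a, AddCommGroup (V a)]
  [module : ∀ a, Module K (V a)]
  map : ∀ a b : P, a ≤ b → (V a →ₗ[K] V b)
  map_refl : ∀ a, map a a le_rfl = LinearMap.id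
  map_comp : ∀ a b c (hab : a ≤ b) (hbc : b ≤ c),
    (map b c hbc).comp (map a b hab) = map a c (hab.trans hbc)

attribute [instance] PMod.addCommGroup PMod.module

/-- The diagonal vector `(ε, ..., ε)` in ℝⁿ. -/
def diag (n : ℕ) (ε : ℝ) : Fin n → ℝ := fun _ => ε

lemma le_add_diag {n : ℕ} {a : Fin n → ℝ} {ε : ℝ} (hε : 0 ≤ ε) :
    a ≤ a + diag n ε := by
  intro i
  simp only [Pi.add_apply, diag, le_add_iff_nonneg_right]
  exact hε

/-- An `ε`-interleaving between multiparameter persistence modules `M` and `N`: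
natural transformations `f : M ⇒ N ∘ T_ε` and `g : N ⇒ M ∘ T_ε` whose composites
are the internal `2ε`-shift morphisms. -/
def Interleaving {n : ℕ} {K : Type} [Field K] (M N : PMod (Fin n → ℝ) K) (ε : ℝ) : Prop :=
  ∃ hε : 0 ≤ ε,
  ∃ (f : ∀ a, M.V a →ₗ[K] N.V (a + diag n ε)) (g : ∀ a, N.V a →ₗ[K] M.V (a + diag n ε)),
    (∀ a b (h : a ≤ b),
      (f b).comp (M.map a b h)
        = (N.map (a + diag n ε) (b + diag n ε) (add_le_add_left h _)).comp (f a)) ∧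
    (∀ a b (h : a ≤ b),
      (g b).comp (N.map a b h)
        = (M.map (a + diag n ε) (b + diag n ε) (add_le_add_left h _)).comp (g a)) ∧
    (∀ a, (g (a + diag n ε)).comp (f a)
        = M.map a (a + diag n ε + diag n ε) ((le_add_diag hε).trans (le_add_diag hε))) ∧
    (∀ a, (f (a + diag n ε)).comp (g a)
        = N.map a (a + diag n ε + diag n ε) ((le_add_diag hε).trans (le_add_diag hε)))

/-- The interleaving distance. -/
noncomputable def dI {n : ℕ} {K : Type} [Field K] (M N : PMod (Fin n → ℝ) K) : ℝ :=
  sInf {ε | Interleaving M N ε}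

/-- The `ε`-simplification `S_ε(M) = (Im φ_ε^M) ∘ T_ε` of a multiparameter
persistence module. -/
noncomputable def SimpMod {n : ℕ} {K : Type} [Field K] (ε : ℝ) (hε : 0 ≤ ε)
    (M : PMod (Fin n → ℝ) K) : PMod (Fin n → ℝ) K where
  V a := ↥(LinearMap.range (M.map a (a + diag n ε) (le_add_diag hε)))
  map a b h := (M.map (a + diag n ε) (b + diag n ε) (add_le_add_left h _)).restrict
    (by
      rintro x ⟨y, rfl⟩
      refine ⟨M.map a b h y, ?_⟩
      have h1 := LinearMap.congr_fun
        (M.map_comp a (a + diag n ε) (b + diag n ε) (le_add_diag hε) (add_le_add_left h _)) y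
      have h2 := LinearMap.congr_fun
        (M.map_comp a b (b + diag n ε) h (le_add_diag hε)) y
      simp only [LinearMap.comp_apply] at h1 h2
      rw [h2, ← h1])
  map_refl a := by
    ext x
    simp [LinearMap.restrict_apply, M.map_refl]
  map_comp a b c hab hbc := by
    ext x
    have h1 := LinearMap.congr_fun
      (M.map_comp (a + diag n ε) (b + diag n ε) (c + diag n ε)
        (add_le_add_left hab _) (add_le_add_left hbc _)) x.1
    simp only [LinearMap.comp_apply] at h1 ⊢
    simp [LinearMap.restrict_apply, h1]

/-- The `ε`-simplification functor perturbs a multiparameter persistence module by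
at most `ε` in the interleaving distance: `M` and `S_ε(M)` are `ε`-interleaved and
hence `d_I(M, S_ε(M)) ≤ ε`. -/
theorem simplification_interleaving {n : ℕ} {K : Type} [Field K] (ε : ℝ) (hε : 0 ≤ ε)
    (M : PMod (Fin n → ℝ) K) :
    Interleaving M (SimpMod ε hε M) ε ∧ dI M (SimpMod ε hε M) ≤ ε := by
  have key : Interleaving M (SimpMod ε hε M) ε := by
    refine ⟨hε, ?_⟩
    refine ⟨fun a => LinearMap.codRestrict _
      (M.map a (a + diag n ε + diag n ε) ((le_add_diag hε).trans (le_add_diag hε)))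
      (fun x => ⟨M.map a (a + diag n ε) (le_add_diag hε) x, by
        have := LinearMap.congr_fun (M.map_comp a (a + diag n ε) (a + diag n ε + diag n ε)
          (le_add_diag hε) (le_add_diag hε)) x
        simpa [LinearMap.comp_apply] using this⟩),
      fun a => (LinearMap.range (M.map a (a + diag n ε) (le_add_diag hε))).subtype,
      ?_, ?_, ?_, ?_⟩
    · intro a b h
      ext x
      have h1 := LinearMap.congr_fun (M.map_comp a b (b + diag n ε + diag n ε) h
        ((le_add_diag hε).trans (le_add_diag hε))) x
      have h2 := LinearMap.congr_fun (M.map_comp a (a + diag n ε + diag n ε)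
        (b + diag n ε + diag n ε) ((le_add_diag hε).trans (le_add_diag hε))
        (add_le_add_left (add_le_add_left h _) _)) x
      simp only [LinearMap.comp_apply] at h1 h2
      apply Subtype.ext
      show M.map b (b + diag n ε + diag n ε) _ (M.map a b h x)
        = M.map (a + diag n ε + diag n ε) (b + diag n ε + diag n ε) _
            (M.map a (a + diag n ε + diag n ε) _ x)
      rw [h1, h2]
    · intro a b h
      ext x
      rfl
    · intro a
      ext x
      rfl
    · intro a
      ext x
      apply Subtype.ext
      show M.map (a + diag n ε) (a + diag n ε + diag n ε + diag n ε) _ x.1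
        = M.map (a + diag n ε) (a + diag n ε + diag n ε + diag n ε) _ x.1
      rfl
  refine ⟨key, ?_⟩
  apply csInf_le
  · exact ⟨0, fun x hx => hx.1⟩
  · exact key
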